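/- The curve c(t) = R_X(tξ) = [U(Σ+tM) + tU_p] (Σ+tM)^{-1} [(Σ+tM)Vᵀ + tV_pᵀ], defined for all t in a neighborhood of 0 (where Σ+tM is invertible because Σ is invertible), satisfies the retraction axioms to first order: c(0) = X and the derivative of c at t = 0 equals ξ = U M Vᵀ + U_p Vᵀ + U V_pᵀ. -/

import Mathlib

open Matrix

attribute [local instance] Matrix.frobeniusNormedAddCommGroup Matrix.frobeniusNormedSpace

/-!
With `A(t) = Σ + tM`, the curve expands exactly as
`c(t) = UΣVᵀ + tξ + t² U_p A(t)⁻¹ V_pᵀ` wherever `A(t)` is invertible, which holds near `0`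
because `det A(t)` is continuous and nonzero at `0`. Since `A(t)⁻¹` is continuous at `0`,
the quadratic term is `o(t)`.
-/

open Filter Topology Asymptotics

theorem hasDerivAt_of_eventuallyEq_add_smul_add_sq_smul {𝕜 E : Type*}
    [NontriviallyNormedField 𝕜] [NormedAddCommGroup E] [NormedSpace 𝕜 E] {f g : 𝕜 → E}
    {a v : E} (hf : f =ᶠ[𝓝 0] fun t => a + t • v + t ^ 2 • g t) (hg : ContinuousAt g 0) :
    HasDerivAt f v 0 := by
  have hf0 : f 0 = a := by simpa using hf.eq_of_nhds
  have hrem : (fun t : 𝕜 => t ^ 2 • g t) =o[𝓝 0] fun t => t := by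
    simpa using (isLittleO_pow_id one_lt_two).smul_isBigO (hg.tendsto.isBigO_one 𝕜)
  refine hasDerivAt_iff_isLittleO_nhds_zero.2 (hrem.congr' ?_ EventuallyEq.rfl)
  filter_upwards [hf] with t ht
  rw [zero_add, ht, hf0]
  abel

theorem Matrix.add_mul_nonsing_inv_mul_add {m n k R : Type*} [Fintype k] [DecidableEq k]
    [CommRing R] {A : Matrix k k R} (hA : IsUnit A) (U P : Matrix m k R) (W Q : Matrix k n R) :
    (U * A + P) * A⁻¹ * (A * W + Q) = U * A * W + P * W + U * Q + P * A⁻¹ * Q := by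
  have hdet := (isUnit_iff_isUnit_det A).mp hA
  simp only [Matrix.add_mul, Matrix.mul_add, Matrix.mul_assoc,
    mul_nonsing_inv_cancel_left _ _ hdet, nonsing_inv_mul_cancel_left _ _ hdet]
  abel

section Pencil

variable {k : Type*} [Fintype k] [DecidableEq k] {S : Matrix k k ℝ}

theorem Matrix.eventually_isUnit_add_smul (hS : IsUnit S) (M : Matrix k k ℝ) :
    ∀ᶠ t : ℝ in 𝓝 0, IsUnit (S + t • M) := by
  have hdet : Continuous fun t : ℝ => (S + t • M).det := by fun_prop
  have h0 : (S + (0 : ℝ) • M).det ≠ 0 := by simpa [isUnit_iff_isUnit_det] using hS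
  filter_upwards [hdet.continuousAt.eventually_ne h0] with t ht
  exact (isUnit_iff_isUnit_det _).2 ht.isUnit

theorem Matrix.continuousAt_inv_add_smul (hS : IsUnit S) (M : Matrix k k ℝ) :
    ContinuousAt (fun t : ℝ => (S + t • M)⁻¹) 0 := by
  have hinv : ContinuousAt Inv.inv (S + (0 : ℝ) • M) := by
    refine continuousAt_matrix_inv _ ?_
    rw [Ring.inverse_eq_inv']
    exact continuousAt_inv₀ (by simpa [isUnit_iff_isUnit_det] using hS)
  exact hinv.comp (f := fun t : ℝ => S + t • M) (by fun_prop)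

end Pencil

theorem stmt_8_general {m n k : ℕ}
    (U : Matrix (Fin m) (Fin k) ℝ) (V : Matrix (Fin n) (Fin k) ℝ)
    (S M : Matrix (Fin k) (Fin k) ℝ) (hS : IsUnit S)
    (Up : Matrix (Fin m) (Fin k) ℝ) (Vp : Matrix (Fin n) (Fin k) ℝ)
    (c : ℝ → Matrix (Fin m) (Fin n) ℝ)
    (hc : ∀ t : ℝ, c t =
      (U * (S + t • M) + t • Up) * (S + t • M)⁻¹ * ((S + t • M) * Vᵀ + t • Vpᵀ)) :
    (∃ ε > (0 : ℝ), ∀ t : ℝ, |t| < ε → IsUnit (S + t • M)) ∧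
    c 0 = U * S * Vᵀ ∧
    HasDerivAt c (U * M * Vᵀ + Up * Vᵀ + U * Vpᵀ) 0 := by
  have hunit := eventually_isUnit_add_smul hS M
  have hexpand : ∀ t : ℝ, IsUnit (S + t • M) → c t = U * S * Vᵀ
      + t • (U * M * Vᵀ + Up * Vᵀ + U * Vpᵀ) + t ^ 2 • (Up * (S + t • M)⁻¹ * Vpᵀ) := by
    intro t ht
    rw [hc t, add_mul_nonsing_inv_mul_add ht]
    simp only [Matrix.mul_add, Matrix.add_mul, Matrix.smul_mul, Matrix.mul_smul]
    module
  obtain ⟨ε, hε, hball⟩ := Metric.eventually_nhds_iff.mp hunit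
  refine ⟨⟨ε, hε, fun t ht => hball (by simpa [Real.dist_eq] using ht)⟩,
    by simpa using hexpand 0 (by simpa using hS), ?_⟩
  have hinv := continuousAt_inv_add_smul hS M
  exact hasDerivAt_of_eventuallyEq_add_smul_add_sq_smul
    (g := fun t => Up * (S + t • M)⁻¹ * Vpᵀ) (hunit.mono hexpand) (by fun_prop)

/-- With `Σ` invertible, the orthographic retraction curve
`c(t) = R_X(tξ)` is defined for all `t` in a neighborhood of `0`
(where `Σ + tM` is invertible) and satisfies the retraction axioms to first
order: `c(0) = X` and `c'(0) = ξ`. -/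
theorem stmt_8 {m n k : ℕ} (hm : 0 < m) (hn : 0 < n) (hk : 0 < k)
    (hkm : k ≤ m) (hkn : k ≤ n)
    (U : Matrix (Fin m) (Fin k) ℝ) (V : Matrix (Fin n) (Fin k) ℝ)
    (hU : Uᵀ * U = 1) (hV : Vᵀ * V = 1)
    (S M : Matrix (Fin k) (Fin k) ℝ) (hS : IsUnit S)
    (Up : Matrix (Fin m) (Fin k) ℝ) (Vp : Matrix (Fin n) (Fin k) ℝ)
    (hUp : Uᵀ * Up = 0) (hVp : Vᵀ * Vp = 0)
    (c : ℝ → Matrix (Fin m) (Fin n) ℝ)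
    (hc : ∀ t : ℝ, c t =
      (U * (S + t • M) + t • Up) * (S + t • M)⁻¹ * ((S + t • M) * Vᵀ + t • Vpᵀ)) :
    (∃ ε > (0 : ℝ), ∀ t : ℝ, |t| < ε → IsUnit (S + t • M)) ∧
    c 0 = U * S * Vᵀ ∧
    HasDerivAt c (U * M * Vᵀ + Up * Vᵀ + U * Vpᵀ) 0 :=
  stmt_8_general U V S M hS Up Vp c hc
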